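/- arXiv:2103.07996 — 2 statements merged into one kernel-verified Lean document; each statement's English description precedes it below -/
import Mathlib

section
/- Let Σ and H be 3×3 real symmetric positive-definite matrices and t ∈ ℝ. Set A = ½(Σ + t²·HΣ⁻¹H) and B = ½Σ⁻¹, and let ρ_A(x) = ((2π)³ det A)^{-1/2} exp(−½ ⟨x, A⁻¹x⟩) and ρ_B(k) = ((2π)³ det B)^{-1/2} exp(−½ ⟨k, B⁻¹k⟩) be the centered Gaussian probability densities on ℝ³ with covariance matrices A and B. Then −∫ ρ_A ln ρ_A − ∫ ρ_B ln ρ_B = 3(1 + ln π) + ½ ln det(I + t²·(Σ⁻¹H)²); in particular this sum is at least 3(1 + ln π), with equality exactly at t = 0. -/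
/-!
A centered Gaussian density with covariance `A` is `Z^(-1/2) exp(-q/2)`, where
`Z = (2π)ⁿ det A` and `q x = x ⬝ᵥ A⁻¹ *ᵥ x`, so its entropy is `(log Z + ∫ q ρ) / 2`. Rotating
to an eigenbasis of `A⁻¹` splits the density into one-dimensional Gaussians, which gives
`∫ exp(-q/2) = √Z` and `∫ q ρ = n`.

For the two covariances of the coherent state, `det A * det B = 4⁻ⁿ det(1 + t²(Σ⁻¹H)²)`.
Since `Σ⁻¹H` is similar to the symmetric matrix `K = Σ^(-1/2) H Σ^(-1/2)`, the matrix
`1 + t²(Σ⁻¹H)²` is similar to `1 + t²K²` with `K²` positive definite, so its determinant is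
at least `1`, with equality only at `t = 0`.
-/

open MeasureTheory Real Matrix

theorem integrable_sq_mul_exp_neg_mul_sq {b : ℝ} (hb : 0 < b) :
    Integrable fun x : ℝ => x ^ 2 * exp (-b * x ^ 2) := by
  simpa using integrable_rpow_mul_exp_neg_mul_sq hb (s := 2) (by norm_num)

theorem integral_sq_mul_exp_neg_mul_sq {b : ℝ} (hb : 0 < b) :
    ∫ x : ℝ, x ^ 2 * exp (-b * x ^ 2) = √(π / b) / (2 * b) := by
  have hv (x : ℝ) :
      HasDerivAt (fun x => exp (-b * x ^ 2) / -(2 * b)) (x * exp (-b * x ^ 2)) x :=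
    ((((hasDerivAt_pow 2 x).const_mul (-b)).exp).div_const (-(2 * b))).congr_deriv (by
      field_simp; ring)
  have hparts := integral_mul_deriv_eq_deriv_mul_of_integrable
    (u := id) (u' := fun _ => 1) (fun x _ => hasDerivAt_id x) (fun x _ => hv x) ?_ ?_ ?_
  · calc ∫ x : ℝ, x ^ 2 * exp (-b * x ^ 2) = ∫ x : ℝ, id x * (x * exp (-b * x ^ 2)) := by
          simp only [id, ← mul_assoc, sq]
      _ = √(π / b) / (2 * b) := by
          rw [hparts]
          simp only [one_mul, div_neg, integral_neg, neg_neg, integral_div, integral_gaussian]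
  · simpa [Pi.mul_def, ← mul_assoc, ← sq] using integrable_sq_mul_exp_neg_mul_sq hb
  · simpa [Pi.mul_def] using (integrable_exp_neg_mul_sq hb).div_const (-(2 * b))
  · simpa [Pi.mul_def, mul_div_assoc] using
      (integrable_mul_exp_neg_mul_sq hb).div_const (-(2 * b))

theorem integrable_mul_sq_mul_exp_neg_half_mul_sq {d : ℝ} (hd : 0 < d) :
    Integrable fun t : ℝ => d * t ^ 2 * exp (-(d / 2) * t ^ 2) := by
  simpa only [mul_assoc] using (integrable_sq_mul_exp_neg_mul_sq (half_pos hd)).const_mul d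

theorem integral_mul_sq_mul_exp_neg_half_mul_sq {d : ℝ} (hd : 0 < d) :
    ∫ t : ℝ, d * t ^ 2 * exp (-(d / 2) * t ^ 2) = ∫ t : ℝ, exp (-(d / 2) * t ^ 2) := by
  simp_rw [mul_assoc]
  rw [integral_const_mul, integral_sq_mul_exp_neg_mul_sq (half_pos hd), integral_gaussian]
  field_simp

namespace Matrix
variable {ι : Type*} [Fintype ι] [DecidableEq ι] {V : Matrix ι ι ℝ}

theorem measurableEmbedding_mulVec_of_mem_orthogonalGroup (hV : V ∈ orthogonalGroup ι ℝ) :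
    MeasurableEmbedding (V *ᵥ ·) :=
  (UnitaryGroup.toLinearEquiv ⟨V, hV⟩).toContinuousLinearEquiv.toHomeomorph.measurableEmbedding

theorem abs_det_of_mem_orthogonalGroup (hV : V ∈ orthogonalGroup ι ℝ) : |V.det| = 1 := by
  simpa using CStarRing.norm_of_mem_unitary (det_of_mem_unitary hV)

theorem measurePreserving_mulVec_of_mem_orthogonalGroup (hV : V ∈ orthogonalGroup ι ℝ) :
    MeasurePreserving (V *ᵥ ·) := by
  have hdet := abs_det_of_mem_orthogonalGroup hV
  have hmap := Real.map_matrix_volume_pi_eq_smul_volume_pi (abs_pos.mp (hdet ▸ one_pos))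
  rw [abs_inv, hdet, inv_one, ENNReal.ofReal_one, one_smul,
    show ⇑(toLin' V) = (V *ᵥ ·) from funext (toLin'_apply V)] at hmap
  exact ⟨Continuous.measurable (by fun_prop), hmap⟩

theorem integral_comp_mulVec_of_mem_orthogonalGroup {E : Type*} [NormedAddCommGroup E]
    [NormedSpace ℝ E] (hV : V ∈ orthogonalGroup ι ℝ) (g : (ι → ℝ) → E) :
    ∫ y, g (V *ᵥ y) = ∫ x, g x :=
  (measurePreserving_mulVec_of_mem_orthogonalGroup hV).integral_comp
    (measurableEmbedding_mulVec_of_mem_orthogonalGroup hV) g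

theorem integrable_comp_mulVec_of_mem_orthogonalGroup_iff {E : Type*} [NormedAddCommGroup E]
    (hV : V ∈ orthogonalGroup ι ℝ) {g : (ι → ℝ) → E} :
    Integrable (fun y => g (V *ᵥ y)) ↔ Integrable g :=
  (measurePreserving_mulVec_of_mem_orthogonalGroup hV).integrable_comp_emb
    (measurableEmbedding_mulVec_of_mem_orthogonalGroup hV)

end Matrix

section ProductIntegral
variable {ι : Type*} [Fintype ι] [DecidableEq ι]

theorem mul_prod_eq_prod_update (f : ι → ℝ → ℝ) (i : ι) (g : ℝ → ℝ) (y : ι → ℝ) :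
    g (y i) * ∏ j, f j (y j) = ∏ j, Function.update f i (fun t => g t * f i t) j (y j) := by
  rw [← Finset.mul_prod_erase _ _ (Finset.mem_univ i),
    ← Finset.mul_prod_erase _ _ (Finset.mem_univ i), Function.update_self, mul_assoc]
  congr 2
  refine Finset.prod_congr rfl fun j hj => ?_
  rw [Function.update_of_ne (Finset.ne_of_mem_erase hj)]

theorem integrable_mul_prod {f : ι → ℝ → ℝ} (hf : ∀ j, Integrable (f j)) {i : ι} {g : ℝ → ℝ}
    (hg : Integrable fun t => g t * f i t) :
    Integrable fun y : ι → ℝ => g (y i) * ∏ j, f j (y j) := by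
  simp_rw [mul_prod_eq_prod_update]
  refine Integrable.fintype_prod fun j => ?_
  rcases eq_or_ne j i with rfl | hj
  · simpa using hg
  · simpa [Function.update_of_ne hj] using hf j

theorem integral_mul_prod {f : ι → ℝ → ℝ} {i : ι} {g : ℝ → ℝ}
    (hg : ∫ t, g t * f i t = ∫ t, f i t) :
    ∫ y : ι → ℝ, g (y i) * ∏ j, f j (y j) = ∏ j, ∫ t, f j t := by
  simp_rw [mul_prod_eq_prod_update]
  rw [integral_fintype_prod_volume_eq_prod]
  refine Finset.prod_congr rfl fun j _ => ?_
  rcases eq_or_ne j i with rfl | hj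
  · simpa using hg
  · simp [Function.update_of_ne hj]

theorem integrable_sum_mul_prod {f g : ι → ℝ → ℝ} (hf : ∀ j, Integrable (f j))
    (hg : ∀ i, Integrable fun t => g i t * f i t) :
    Integrable fun y : ι → ℝ => (∑ i, g i (y i)) * ∏ j, f j (y j) := by
  simp_rw [Finset.sum_mul]
  exact integrable_finsetSum _ fun i _ => integrable_mul_prod hf (hg i)

theorem integral_sum_mul_prod {f g : ι → ℝ → ℝ} (hf : ∀ j, Integrable (f j))
    (hg : ∀ i, Integrable fun t => g i t * f i t)
    (hgf : ∀ i, ∫ t, g i t * f i t = ∫ t, f i t) :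
    ∫ y : ι → ℝ, (∑ i, g i (y i)) * ∏ j, f j (y j) = Fintype.card ι * ∏ j, ∫ t, f j t := by
  simp_rw [Finset.sum_mul]
  rw [integral_finsetSum _ fun i _ => integrable_mul_prod hf (hg i)]
  simp [integral_mul_prod (hgf _)]

end ProductIntegral

namespace Matrix.IsHermitian
variable {ι : Type*} [Fintype ι] [DecidableEq ι] {P : Matrix ι ι ℝ}

theorem eigenvectorUnitary_mulVec_dotProduct_mulVec (hP : P.IsHermitian) (y : ι → ℝ) :
    (hP.eigenvectorUnitary.1 *ᵥ y) ⬝ᵥ P *ᵥ (hP.eigenvectorUnitary.1 *ᵥ y) =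
      ∑ i, hP.eigenvalues i * y i ^ 2 := by
  set V : Matrix ι ι ℝ := hP.eigenvectorUnitary.1
  have hdiag : Vᵀ * P * V = diagonal hP.eigenvalues := by
    simpa [star_eq_conjTranspose] using hP.conjStarAlgAut_star_eigenvectorUnitary
  calc (V *ᵥ y) ⬝ᵥ P *ᵥ (V *ᵥ y) = y ⬝ᵥ (Vᵀ * P * V) *ᵥ y := by
        rw [← mulVec_mulVec, ← mulVec_mulVec, dotProduct_mulVec _ Vᵀ, vecMul_transpose,
          mulVec_mulVec]
    _ = ∑ i, hP.eigenvalues i * y i ^ 2 := by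
        simp only [hdiag, dotProduct, mulVec_diagonal]
        exact Finset.sum_congr rfl fun i _ => by ring

theorem exp_neg_half_quadForm_eigenvectorUnitary_mulVec (hP : P.IsHermitian) (y : ι → ℝ) :
    Real.exp (-(1 / 2) * ((hP.eigenvectorUnitary.1 *ᵥ y) ⬝ᵥ P *ᵥ (hP.eigenvectorUnitary.1 *ᵥ y))) =
      ∏ i, Real.exp (-(hP.eigenvalues i / 2) * y i ^ 2) := by
  rw [hP.eigenvectorUnitary_mulVec_dotProduct_mulVec, Finset.mul_sum, exp_sum]
  exact Finset.prod_congr rfl fun i _ => by ring_nf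

end Matrix.IsHermitian

namespace Matrix.PosDef
variable {ι : Type*} [Fintype ι] [DecidableEq ι] {P : Matrix ι ι ℝ}

theorem prod_sqrt_pi_div_half_eigenvalues (hP : P.PosDef) :
    ∏ i, √(π / (hP.isHermitian.eigenvalues i / 2)) = √((2 * π) ^ Fintype.card ι / P.det) := by
  rw [hP.isHermitian.det_eq_prod_eigenvalues, ← Real.sqrt_prod _ fun i _ => ?_]
  · simp [Finset.prod_div_distrib, div_div_eq_mul_div, mul_comm]
  · exact div_nonneg pi_pos.le (half_pos (hP.eigenvalues_pos i)).le

theorem integrable_exp_neg_half_quadForm (hP : P.PosDef) :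
    Integrable fun x : ι → ℝ => exp (-(1 / 2) * (x ⬝ᵥ P *ᵥ x)) := by
  rw [← integrable_comp_mulVec_of_mem_orthogonalGroup_iff hP.isHermitian.eigenvectorUnitary.2]
  simp_rw [hP.isHermitian.exp_neg_half_quadForm_eigenvectorUnitary_mulVec]
  exact Integrable.fintype_prod fun i =>
    integrable_exp_neg_mul_sq (half_pos (hP.eigenvalues_pos i))

theorem integral_exp_neg_half_quadForm (hP : P.PosDef) :
    ∫ x : ι → ℝ, exp (-(1 / 2) * (x ⬝ᵥ P *ᵥ x)) = √((2 * π) ^ Fintype.card ι / P.det) := by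
  rw [← integral_comp_mulVec_of_mem_orthogonalGroup hP.isHermitian.eigenvectorUnitary.2]
  simp_rw [hP.isHermitian.exp_neg_half_quadForm_eigenvectorUnitary_mulVec]
  rw [integral_fintype_prod_volume_eq_prod
    (fun i t => exp (-(hP.isHermitian.eigenvalues i / 2) * t ^ 2))]
  simp_rw [integral_gaussian]
  exact hP.prod_sqrt_pi_div_half_eigenvalues

theorem integrable_quadForm_mul_exp_neg_half_quadForm (hP : P.PosDef) :
    Integrable fun x : ι → ℝ => (x ⬝ᵥ P *ᵥ x) * exp (-(1 / 2) * (x ⬝ᵥ P *ᵥ x)) := by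
  rw [← integrable_comp_mulVec_of_mem_orthogonalGroup_iff hP.isHermitian.eigenvectorUnitary.2]
  simp_rw [hP.isHermitian.exp_neg_half_quadForm_eigenvectorUnitary_mulVec,
    hP.isHermitian.eigenvectorUnitary_mulVec_dotProduct_mulVec]
  exact integrable_sum_mul_prod
    (fun j => integrable_exp_neg_mul_sq (half_pos (hP.eigenvalues_pos j)))
    (fun i => integrable_mul_sq_mul_exp_neg_half_mul_sq (hP.eigenvalues_pos i))

theorem integral_quadForm_mul_exp_neg_half_quadForm (hP : P.PosDef) :
    ∫ x : ι → ℝ, (x ⬝ᵥ P *ᵥ x) * exp (-(1 / 2) * (x ⬝ᵥ P *ᵥ x)) =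
      Fintype.card ι * √((2 * π) ^ Fintype.card ι / P.det) := by
  rw [← integral_comp_mulVec_of_mem_orthogonalGroup hP.isHermitian.eigenvectorUnitary.2]
  simp_rw [hP.isHermitian.exp_neg_half_quadForm_eigenvectorUnitary_mulVec,
    hP.isHermitian.eigenvectorUnitary_mulVec_dotProduct_mulVec]
  rw [integral_sum_mul_prod
    (fun j => integrable_exp_neg_mul_sq (half_pos (hP.eigenvalues_pos j)))
    (fun i => integrable_mul_sq_mul_exp_neg_half_mul_sq (hP.eigenvalues_pos i))
    (fun i => integral_mul_sq_mul_exp_neg_half_mul_sq (hP.eigenvalues_pos i))]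
  simp_rw [integral_gaussian]
  rw [hP.prod_sqrt_pi_div_half_eigenvalues]

end Matrix.PosDef

noncomputable def differentialEntropy {α : Type*} [MeasureSpace α] (ρ : α → ℝ) : ℝ :=
  -∫ x, ρ x * log (ρ x)

noncomputable def centeredGaussianPDF {ι : Type*} [Fintype ι] [DecidableEq ι]
    (A : Matrix ι ι ℝ) (x : ι → ℝ) : ℝ :=
  ((2 * π) ^ Fintype.card ι * A.det) ^ (-(1 : ℝ) / 2) * exp (-(1 / 2) * (x ⬝ᵥ A⁻¹ *ᵥ x))

theorem differentialEntropy_centeredGaussianPDF {ι : Type*} [Fintype ι] [DecidableEq ι]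
    {A : Matrix ι ι ℝ} (hA : A.PosDef) :
    differentialEntropy (centeredGaussianPDF A) =
      (Fintype.card ι + log ((2 * π) ^ Fintype.card ι * A.det)) / 2 := by
  set Z := (2 * π) ^ Fintype.card ι * A.det
  have hZ : 0 < Z := by have := hA.det_pos; positivity
  have hZ' : (2 * π) ^ Fintype.card ι / A⁻¹.det = Z := by
    rw [det_nonsing_inv, Ring.inverse_eq_inv, div_inv_eq_mul]
  have hE := hA.inv.integral_exp_neg_half_quadForm
  have hqE := hA.inv.integral_quadForm_mul_exp_neg_half_quadForm
  rw [hZ'] at hE hqE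
  have hlog (x : ι → ℝ) : centeredGaussianPDF A x * log (centeredGaussianPDF A x) =
      -(log Z / (2 * √Z)) * exp (-(1 / 2) * (x ⬝ᵥ A⁻¹ *ᵥ x)) +
        -(1 / (2 * √Z)) * ((x ⬝ᵥ A⁻¹ *ᵥ x) * exp (-(1 / 2) * (x ⬝ᵥ A⁻¹ *ᵥ x))) := by
    rw [centeredGaussianPDF, log_mul (rpow_pos_of_pos hZ _).ne' (exp_pos _).ne', log_exp,
      log_rpow hZ, neg_div, rpow_neg hZ.le, ← sqrt_eq_rpow]
    field_simp
  simp_rw [differentialEntropy, hlog]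
  rw [integral_add (hA.inv.integrable_exp_neg_half_quadForm.const_mul _)
      (hA.inv.integrable_quadForm_mul_exp_neg_half_quadForm.const_mul _),
    integral_const_mul, integral_const_mul, hE, hqE]
  field_simp
  ring

namespace Matrix
variable {n : Type*} [Fintype n] {M S H : Matrix n n ℝ}

theorem IsHermitian.posSemidef_mul_self (hM : M.IsHermitian) : (M * M).PosSemidef := by
  have := posSemidef_conjTranspose_mul_self M
  rwa [hM.eq] at this

variable [DecidableEq n]

theorem IsHermitian.det_one_add (hM : M.IsHermitian) :
    (1 + M).det = ∏ i, (1 + hM.eigenvalues i) := by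
  have h1M : 1 + M = cfc (fun x : ℝ => 1 + x) M := by
    rw [cfc_add .., cfc_const_one .., cfc_id' ..]
  rw [h1M, hM.cfc_eq]
  simp [IsHermitian.cfc, -Unitary.conjStarAlgAut_apply]

theorem PosSemidef.one_le_det_one_add (hM : M.PosSemidef) : 1 ≤ (1 + M).det := by
  rw [hM.isHermitian.det_one_add]
  exact Finset.one_le_prod fun i _ => le_add_of_nonneg_right (hM.eigenvalues_nonneg i)

theorem PosSemidef.one_lt_det_one_add (hM : M.PosSemidef) (hM0 : M ≠ 0) : 1 < (1 + M).det := by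
  obtain ⟨i, hi⟩ : ∃ i, hM.isHermitian.eigenvalues i ≠ 0 := by
    by_contra! h
    exact hM0 (hM.isHermitian.eigenvalues_eq_zero_iff.mp (funext h))
  have hpos (j : n) : 0 ≤ hM.isHermitian.eigenvalues j := hM.eigenvalues_nonneg j
  rw [hM.isHermitian.det_one_add]
  refine Finset.prod_const_one.symm.trans_lt <| Finset.prod_lt_prod (fun _ _ => one_pos)
    (fun j _ => le_add_of_nonneg_right (hpos j))
    ⟨i, Finset.mem_univ i, lt_add_of_pos_right 1 ((hpos i).lt_of_ne' hi)⟩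

theorem det_add_smul_mul_inv_mul (hS : IsUnit S.det) (H : Matrix n n ℝ) (s : ℝ) :
    (S + s • (H * S⁻¹ * H)).det = S.det * (1 + s • (S⁻¹ * H * (S⁻¹ * H))).det := by
  rw [← det_mul]
  congr 1
  simp only [Matrix.mul_add, Matrix.mul_one, Matrix.mul_smul, ← Matrix.mul_assoc,
    mul_nonsing_inv _ hS, Matrix.one_mul]

open scoped MatrixOrder in
theorem PosDef.exists_isHermitian_det_one_add_smul_inv_mul_sq (hS : S.PosDef)
    (hH : H.IsHermitian) : ∃ K : Matrix n n ℝ, K.IsHermitian ∧ K.det = H.det / S.det ∧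
      ∀ s : ℝ, (1 + s • (S⁻¹ * H * (S⁻¹ * H))).det = (1 + s • (K * K)).det := by
  set R := CFC.sqrt S⁻¹
  have hR : R.PosSemidef := (CFC.sqrt_nonneg _).posSemidef
  have hRR : R * R = S⁻¹ := CFC.sqrt_mul_sqrt_self _ hS.inv.posSemidef.nonneg
  have hRR' (X : Matrix n n ℝ) : R * (R * X) = S⁻¹ * X := by rw [← Matrix.mul_assoc, hRR]
  have hdetRR : R.det * R.det = S.det⁻¹ := by
    rw [← det_mul, hRR, det_nonsing_inv, Ring.inverse_eq_inv]
  have hRunit : IsUnit R.det := isUnit_iff_ne_zero.mpr fun h => by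
    rw [h, zero_mul] at hdetRR
    exact inv_ne_zero hS.det_pos.ne' hdetRR.symm
  -- `S⁻¹ H S⁻¹ H = R (K K) R⁻¹` for `K = R H R`, `R = S^(-1/2)`.
  refine ⟨R * H * R, ?_, ?_, fun s => ?_⟩
  · rw [IsHermitian, conjTranspose_mul, conjTranspose_mul, hR.isHermitian.eq, hH.eq,
      Matrix.mul_assoc]
  · rw [det_mul, det_mul, mul_right_comm, hdetRR, div_eq_inv_mul]
  · conv_rhs => rw [← det_conj ((isUnit_iff_isUnit_det R).mpr hRunit)]
    congr 1
    simp only [Matrix.mul_add, Matrix.add_mul, Matrix.mul_one, Matrix.mul_smul, Matrix.smul_mul,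
      Matrix.mul_assoc, hRR', mul_nonsing_inv _ hRunit]

theorem PosDef.one_le_det_one_add_sq_smul_inv_mul_sq (hS : S.PosDef) (hH : H.IsHermitian)
    (t : ℝ) : 1 ≤ (1 + t ^ 2 • (S⁻¹ * H * (S⁻¹ * H))).det := by
  obtain ⟨K, hK, -, hdet⟩ := hS.exists_isHermitian_det_one_add_smul_inv_mul_sq hH
  rw [hdet]
  exact (hK.posSemidef_mul_self.smul (sq_nonneg t)).one_le_det_one_add

theorem PosDef.det_one_add_sq_smul_inv_mul_sq_eq_one_iff [Nonempty n] (hS : S.PosDef)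
    (hH : H.IsHermitian) (hH0 : H.det ≠ 0) {t : ℝ} :
    (1 + t ^ 2 • (S⁻¹ * H * (S⁻¹ * H))).det = 1 ↔ t = 0 := by
  obtain ⟨K, hK, hKdet, hdet⟩ := hS.exists_isHermitian_det_one_add_smul_inv_mul_sq hH
  refine ⟨fun h => by_contra fun ht => ?_, fun ht => by simp [ht]⟩
  have hKK : K * K ≠ 0 := fun h0 => by
    have := congrArg det h0
    rw [det_mul, hKdet, det_zero] at this
    exact mul_self_ne_zero.mpr (div_ne_zero hH0 hS.det_pos.ne') this
  rw [hdet] at h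
  exact ((hK.posSemidef_mul_self.smul (sq_nonneg t)).one_lt_det_one_add
    (smul_ne_zero (pow_ne_zero 2 ht) hKK)).ne' h

end Matrix

theorem differentialEntropy_coherentState {ι : Type*} [Fintype ι] [DecidableEq ι]
    {S H : Matrix ι ι ℝ} (hS : S.PosDef) (hH : H.IsHermitian) (t : ℝ) :
    differentialEntropy (centeredGaussianPDF ((1 / 2 : ℝ) • (S + t ^ 2 • (H * S⁻¹ * H)))) +
        differentialEntropy (centeredGaussianPDF ((1 / 2 : ℝ) • S⁻¹)) =
      Fintype.card ι * (1 + log π) + 1 / 2 * log (1 + t ^ 2 • (S⁻¹ * H * (S⁻¹ * H))).det := by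
  have hHSH : (H * S⁻¹ * H).PosSemidef := by
    have := hS.inv.posSemidef.conjTranspose_mul_mul_same H
    rwa [hH.eq] at this
  have hA : ((1 / 2 : ℝ) • (S + t ^ 2 • (H * S⁻¹ * H))).PosDef :=
    (hS.add_posSemidef (hHSH.smul (sq_nonneg t))).smul one_half_pos
  have hB : ((1 / 2 : ℝ) • S⁻¹).PosDef := hS.inv.smul one_half_pos
  have hZA : 0 < (2 * π) ^ Fintype.card ι * ((1 / 2 : ℝ) • (S + t ^ 2 • (H * S⁻¹ * H))).det := by
    have := hA.det_pos; positivity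
  have hZB : 0 < (2 * π) ^ Fintype.card ι * ((1 / 2 : ℝ) • S⁻¹).det := by
    have := hB.det_pos; positivity
  have hD : 0 < (1 + t ^ 2 • (S⁻¹ * H * (S⁻¹ * H))).det :=
    one_pos.trans_le (hS.one_le_det_one_add_sq_smul_inv_mul_sq hH t)
  have hdet : ((2 * π) ^ Fintype.card ι * ((1 / 2 : ℝ) • (S + t ^ 2 • (H * S⁻¹ * H))).det) *
      ((2 * π) ^ Fintype.card ι * ((1 / 2 : ℝ) • S⁻¹).det) =
        π ^ (2 * Fintype.card ι) * (1 + t ^ 2 • (S⁻¹ * H * (S⁻¹ * H))).det := by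
    have hSdet := hS.det_pos.ne'
    rw [det_smul, det_smul, det_add_smul_mul_inv_mul hSdet.isUnit, det_nonsing_inv,
      Ring.inverse_eq_inv, one_div, inv_pow]
    field_simp
    ring
  have hlog := congrArg log hdet
  rw [log_mul hZA.ne' hZB.ne', log_mul (pow_pos pi_pos _).ne' hD.ne', log_pow] at hlog
  rw [differentialEntropy_centeredGaussianPDF hA, differentialEntropy_centeredGaussianPDF hB]
  push_cast at hlog
  linear_combination hlog / 2

/-- The entropy of a coherent state evolved for time `t`: the sum of the differential
entropies of the centered Gaussians with covariances `½(Σ + t²HΣ⁻¹H)` and `½Σ⁻¹`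
equals `3(1 + ln π) + ½ ln det(I + t²(Σ⁻¹H)²)`, is at least `3(1 + ln π)`,
with equality exactly at `t = 0`. -/
theorem coherent_state_entropy
    (S H : Matrix (Fin 3) (Fin 3) ℝ) (hS : S.PosDef) (hH : H.PosDef)
    (t : ℝ) (A B : Matrix (Fin 3) (Fin 3) ℝ)
    (hA : A = (1 / 2 : ℝ) • (S + t ^ 2 • (H * S⁻¹ * H)))
    (hB : B = (1 / 2 : ℝ) • S⁻¹)
    (ρA ρB : (Fin 3 → ℝ) → ℝ)
    (hρA : ∀ x, ρA x = ((2 * π) ^ 3 * A.det) ^ (-(1 : ℝ) / 2) *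
        Real.exp (-(1 / 2) * dotProduct x (A⁻¹.mulVec x)))
    (hρB : ∀ k, ρB k = ((2 * π) ^ 3 * B.det) ^ (-(1 : ℝ) / 2) *
        Real.exp (-(1 / 2) * dotProduct k (B⁻¹.mulVec k))) :
    ((-∫ x, ρA x * Real.log (ρA x)) + (-∫ k, ρB k * Real.log (ρB k)) =
      3 * (1 + Real.log π) +
        (1 / 2) * Real.log (1 + t ^ 2 • ((S⁻¹ * H) * (S⁻¹ * H))).det) ∧
    (3 * (1 + Real.log π) ≤
      (-∫ x, ρA x * Real.log (ρA x)) + (-∫ k, ρB k * Real.log (ρB k))) ∧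
    ((-∫ x, ρA x * Real.log (ρA x)) + (-∫ k, ρB k * Real.log (ρB k)) =
        3 * (1 + Real.log π) ↔ t = 0) := by
  subst hA hB
  obtain rfl : ρA = centeredGaussianPDF _ := funext fun x => by
    rw [hρA, centeredGaussianPDF, Fintype.card_fin]
  obtain rfl : ρB = centeredGaussianPDF _ := funext fun x => by
    rw [hρB, centeredGaussianPDF, Fintype.card_fin]
  have hentropy := differentialEntropy_coherentState hS hH.isHermitian t
  have hD := hS.one_le_det_one_add_sq_smul_inv_mul_sq hH.isHermitian t
  rw [Fintype.card_fin, Nat.cast_ofNat] at hentropy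
  rw [← differentialEntropy, ← differentialEntropy, hentropy,
    ← hS.det_one_add_sq_smul_inv_mul_sq_eq_one_iff hH.isHermitian hH.det_pos.ne']
  refine ⟨rfl, by linarith [log_nonneg hD], ?_⟩
  rw [add_eq_left, mul_eq_zero, or_iff_right (one_div_ne_zero two_ne_zero)]
  exact ⟨fun h => by rw [← exp_log (one_pos.trans_le hD), h, exp_zero], fun h => by rw [h, log_one]⟩
end

section
/- Let a₀ > 0 and define ρ : ℝ³ → ℝ by ρ(x) = (1/(π a₀³)) e^{-2‖x‖/a₀} (Euclidean norm). Then ρ is a probability density, ∫_{ℝ³} ρ(x) dx = 1, and its differential entropy equals −∫_{ℝ³} ρ(x) ln ρ(x) dx = 3 + ln π + 3 ln a₀. -/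
/-!
In spherical coordinates every integral reduces to `∫₀^∞ r^n e^{-br} dr = n!/b^{n+1}`.
Writing `ρ = c e^{-b‖x‖}` with `b = 2/a₀`, `c = 1/(πa₀³)`, one has `∫ ρ = 8πc/b³ = 1` and
`-ρ ln ρ = -ρ ln c + b‖x‖ρ`, whose integral is `-ln c + b · 3/b = 3 + ln π + 3 ln a₀`,
since the mean radius of `ρ` is `3/b`.
-/

open MeasureTheory Real Set

lemma integrableOn_pow_mul_exp_neg_mul_Ioi (n : ℕ) {b : ℝ} (hb : 0 < b) :
    IntegrableOn (fun y : ℝ => y ^ n * exp (-(b * y))) (Ioi 0) := by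
  refine (integrableOn_rpow_mul_exp_neg_mul_rpow (s := n) (p := 1)
    (neg_one_lt_zero.trans_le n.cast_nonneg) one_pos hb).congr_fun
    (fun y _ => ?_) measurableSet_Ioi
  simp only [rpow_natCast, rpow_one, neg_mul]

lemma integral_pow_mul_exp_neg_mul_Ioi (n : ℕ) {b : ℝ} (hb : 0 < b) :
    ∫ y in Ioi (0 : ℝ), y ^ n * exp (-(b * y)) = n.factorial / b ^ (n + 1) := by
  have h := integral_rpow_mul_exp_neg_mul_Ioi (a := n + 1) (by positivity) hb
  rw [add_sub_cancel_right, Gamma_nat_eq_factorial, ← Nat.cast_succ, rpow_natCast] at h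
  simp_rw [rpow_natCast] at h
  rw [h, one_div, inv_pow, inv_mul_eq_div]

section EuclideanSpaceFinThree

local notation "ℝ³" => EuclideanSpace ℝ (Fin 3)

lemma integrable_fun_norm_euclideanSpace_fin_three {f : ℝ → ℝ} :
    Integrable (fun x : ℝ³ => f ‖x‖) ↔ IntegrableOn (fun y => y ^ 2 * f y) (Ioi 0) := by
  simpa using integrable_fun_norm_addHaar (volume : Measure ℝ³) (f := f)

lemma integral_fun_norm_euclideanSpace_fin_three (f : ℝ → ℝ) :
    ∫ x : ℝ³, f ‖x‖ = 4 * π * ∫ y in Ioi (0 : ℝ), y ^ 2 * f y := by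
  rw [integral_fun_norm_addHaar (volume : Measure ℝ³) f]
  simp only [finrank_euclideanSpace_fin, measureReal_def, EuclideanSpace.volume_ball_fin_three,
    ENNReal.ofReal_one, one_pow, one_mul, ENNReal.toReal_ofReal (by positivity : 0 ≤ π * 4 / 3),
    nsmul_eq_mul, smul_eq_mul]
  norm_num
  ring

lemma integrable_norm_pow_mul_exp_neg_mul_norm (n : ℕ) {b : ℝ} (hb : 0 < b) :
    Integrable (fun x : ℝ³ => ‖x‖ ^ n * exp (-(b * ‖x‖))) := by
  refine (integrable_fun_norm_euclideanSpace_fin_three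
    (f := fun y => y ^ n * exp (-(b * y)))).2 ?_
  simpa only [← mul_assoc, ← pow_add, add_comm 2 n] using
    integrableOn_pow_mul_exp_neg_mul_Ioi (n + 2) hb

lemma integral_norm_pow_mul_exp_neg_mul_norm (n : ℕ) {b : ℝ} (hb : 0 < b) :
    ∫ x : ℝ³, ‖x‖ ^ n * exp (-(b * ‖x‖)) = 4 * π * (n + 2).factorial / b ^ (n + 3) := by
  rw [integral_fun_norm_euclideanSpace_fin_three (fun y => y ^ n * exp (-(b * y)))]
  simp only [← mul_assoc, ← pow_add, add_comm 2 n]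
  rw [integral_pow_mul_exp_neg_mul_Ioi _ hb, mul_div_assoc]

lemma integral_exp_neg_mul_norm {b : ℝ} (hb : 0 < b) :
    ∫ x : ℝ³, exp (-(b * ‖x‖)) = 8 * π / b ^ 3 := by
  have h := integral_norm_pow_mul_exp_neg_mul_norm 0 hb
  simp only [pow_zero, one_mul, Nat.factorial] at h
  rw [h]
  ring

lemma integral_mul_exp_neg_mul_norm_mul_log {b c : ℝ} (hb : 0 < b) (hc : 0 < c) :
    ∫ x : ℝ³, c * exp (-(b * ‖x‖)) * log (c * exp (-(b * ‖x‖))) =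
      8 * π * c / b ^ 3 * (log c - 3) := by
  have hsplit : ∀ x : ℝ³, c * exp (-(b * ‖x‖)) * log (c * exp (-(b * ‖x‖))) =
      c * log c * (‖x‖ ^ 0 * exp (-(b * ‖x‖))) - c * b * (‖x‖ ^ 1 * exp (-(b * ‖x‖))) := by
    intro x
    rw [log_mul hc.ne' (exp_pos _).ne', log_exp]
    ring
  simp_rw [hsplit]
  rw [integral_sub ((integrable_norm_pow_mul_exp_neg_mul_norm 0 hb).const_mul _)
      ((integrable_norm_pow_mul_exp_neg_mul_norm 1 hb).const_mul _),
    integral_const_mul, integral_const_mul, integral_norm_pow_mul_exp_neg_mul_norm 0 hb,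
    integral_norm_pow_mul_exp_neg_mul_norm 1 hb]
  simp only [Nat.factorial]
  field_simp
  ring

end EuclideanSpaceFinThree

/-- The hydrogen ground-state position density `ρ(x) = (1/(πa₀³)) e^{−2‖x‖/a₀}` is a
probability density on ℝ³ and its differential entropy is `3 + ln π + 3 ln a₀`. -/
theorem hydrogen_ground_state_entropy
    (a₀ : ℝ) (ha₀ : 0 < a₀)
    (ρ : EuclideanSpace ℝ (Fin 3) → ℝ)
    (hρ : ∀ x, ρ x = (1 / (π * a₀ ^ 3)) * Real.exp (-2 * ‖x‖ / a₀)) :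
    (∀ x, 0 ≤ ρ x) ∧ (∫ x, ρ x = 1) ∧
    (-∫ x, ρ x * Real.log (ρ x) = 3 + Real.log π + 3 * Real.log a₀) := by
  set b := 2 / a₀ with hb_def
  set c := 1 / (π * a₀ ^ 3) with hc_def
  have hb : 0 < b := by positivity
  have hc : 0 < c := by positivity
  have hρ_eq : ρ = fun x => c * exp (-(b * ‖x‖)) := by
    funext x
    rw [hρ, neg_mul, neg_div, mul_div_right_comm]
  have hnormalized : 8 * π * c / b ^ 3 = 1 := by
    rw [hb_def, hc_def]
    field_simp
    ring
  have hlog_c : log c = -(log π + 3 * log a₀) := by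
    rw [hc_def, one_div, log_inv, log_mul pi_pos.ne' (by positivity), log_pow, Nat.cast_ofNat]
  subst hρ_eq
  refine ⟨fun x => by positivity, ?_, ?_⟩
  · rw [integral_const_mul, integral_exp_neg_mul_norm hb, ← hnormalized]
    ring
  · rw [integral_mul_exp_neg_mul_norm_mul_log hb hc, hnormalized, hlog_c]
    ring
end
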